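/- arXiv:2005.07084 — 6 statements merged into one kernel-verified Lean document; each statement's English description precedes it below -/
import Mathlib

section
/- Let d ≥ 1, β > 0, n > 0, and let f : ℝ^d → ℝ be continuous with f ≥ 0 and Lipschitz continuous with constant L_f on the ball B_n = {x ∈ ℝ^d : |x| ≤ n}. Then there exists a constant C₁ > 0, depending only on β, n, L_f, and the infimum f̲ and supremum f̄ of f on B_n, such that for all continuous paths φ, φ̂ : [0,∞) → ℝ^d and all t > 0 with ‖φ‖_t ≤ n and ‖φ̂‖_t ≤ n one has |p_f[φ](t) − p_f[φ̂](t)| ≤ C₁ ‖φ − φ̂‖_t. -/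
open scoped BigOperators

/-- The weighted personal best `p_f[φ](t)` along a path `φ`. -/
noncomputable def personalBest {d : ℕ} (β : ℝ) (f : EuclideanSpace ℝ (Fin d) → ℝ)
    (φ : ℝ → EuclideanSpace ℝ (Fin d)) (t : ℝ) : EuclideanSpace ℝ (Fin d) :=
  if t = 0 then φ 0
  else (∫ s in (0:ℝ)..t, Real.exp (-(β * f (φ s))))⁻¹ •
    ∫ s in (0:ℝ)..t, Real.exp (-(β * f (φ s))) • φ s

/-!
On `[0, t]` the weights `w = exp (-β f ∘ φ)` lie in `[exp (-β M), 1]`, where `M = f 0 + L_f n`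
bounds `f` on `B_n`, and they are `β L_f`-Lipschitz in the path, since `exp` is `1`-Lipschitz on
`(-∞, 0]`. Writing `p = J / I` with `I = ∫ w` and `J = ∫ w φ`, one has
`J / I - J' / I' = ((J - J') + (I' - I) (J' / I')) / I`, where `‖J' / I'‖ ≤ n` because a weighted
average of points of `B_n` stays in `B_n`. Both differences `J - J'` and `I - I'` are `O(t δ)` with
`δ = ‖φ - φ'‖_t`, while `I ≥ t exp (-β M)`, so the factor `t` cancels.
-/

open Set intervalIntegral

lemma abs_exp_sub_exp_le_of_nonpos {a b : ℝ} (ha : a ≤ 0) (hb : b ≤ 0) :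
    |Real.exp a - Real.exp b| ≤ |a - b| := by
  wlog hba : b ≤ a generalizing a b
  · rw [abs_sub_comm, abs_sub_comm a b]
    exact this hb ha (le_of_not_ge hba)
  have hexp : Real.exp b = Real.exp (b - a) * Real.exp a := by
    rw [← Real.exp_add, sub_add_cancel]
  have h1 := Real.add_one_le_exp (b - a)
  have h2 : Real.exp a ≤ 1 := Real.exp_le_one_iff.mpr ha
  have h3 : Real.exp b ≤ Real.exp a := Real.exp_le_exp.mpr hba
  rw [abs_of_nonneg (by linarith), abs_of_nonneg (by linarith)]
  nlinarith [Real.exp_pos a]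

section WeightedAverage

variable {V : Type*} [NormedAddCommGroup V] [NormedSpace ℝ V]

lemma norm_inv_smul_sub_inv_smul_le {I I' R : ℝ} {J J' : V} (hI : 0 < I) (hI' : 0 < I')
    (hJ' : ‖J'‖ ≤ R * I') :
    ‖I⁻¹ • J - I'⁻¹ • J'‖ ≤ (‖J - J'‖ + R * |I - I'|) / I := by
  have key : I⁻¹ • J - I'⁻¹ • J' = I⁻¹ • ((J - J') + ((I' - I) / I') • J') := by
    rw [smul_add, smul_smul, show I⁻¹ * ((I' - I) / I') = I⁻¹ - I'⁻¹ by field_simp,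
      sub_smul, smul_sub]
    abel
  have hquot : ‖((I' - I) / I') • J'‖ ≤ R * |I - I'| := by
    rw [norm_smul, Real.norm_eq_abs, abs_div, abs_of_pos hI', abs_sub_comm, div_mul_eq_mul_div,
      div_le_iff₀ hI']
    calc |I - I'| * ‖J'‖ ≤ |I - I'| * (R * I') := by gcongr
      _ = R * |I - I'| * I' := by ring
  rw [key, norm_smul, Real.norm_eq_abs, abs_of_pos (inv_pos.mpr hI), inv_mul_eq_div]
  gcongr
  exact (norm_add_le _ _).trans (by gcongr)

lemma norm_intervalIntegral_sub_le {g g' : ℝ → V} {t C : ℝ} (ht : 0 ≤ t)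
    (hg : IntervalIntegrable g MeasureTheory.volume 0 t)
    (hg' : IntervalIntegrable g' MeasureTheory.volume 0 t)
    (h : ∀ s ∈ Icc 0 t, ‖g s - g' s‖ ≤ C) :
    ‖(∫ s in (0:ℝ)..t, g s) - ∫ s in (0:ℝ)..t, g' s‖ ≤ C * t := by
  rw [← integral_sub hg hg']
  refine (norm_integral_le_of_norm_le_const fun s hs => h s ?_).trans_eq ?_
  · rw [uIoc_of_le ht] at hs
    exact Ioc_subset_Icc_self hs
  · rw [sub_zero, abs_of_nonneg ht]

lemma norm_intervalIntegral_smul_le {w : ℝ → ℝ} {φ : ℝ → V} {t R : ℝ} (ht : 0 ≤ t)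
    (hw : ContinuousOn w (Icc 0 t)) (hφ : ContinuousOn φ (Icc 0 t))
    (hw0 : ∀ s ∈ Icc 0 t, 0 ≤ w s) (hφR : ∀ s ∈ Icc 0 t, ‖φ s‖ ≤ R) :
    ‖∫ s in (0:ℝ)..t, w s • φ s‖ ≤ R * ∫ s in (0:ℝ)..t, w s := by
  rw [← uIcc_of_le ht] at hw hφ
  rw [← integral_const_mul]
  refine (norm_integral_le_integral_norm ht).trans <|
    integral_mono_on ht ((hw.smul hφ).norm.intervalIntegrable)
      (continuousOn_const.mul hw).intervalIntegrable fun s hs => ?_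
  rw [norm_smul, Real.norm_eq_abs, abs_of_nonneg (hw0 s hs), mul_comm]
  exact mul_le_mul_of_nonneg_right (hφR s hs) (hw0 s hs)

lemma mul_le_intervalIntegral {w : ℝ → ℝ} {t m : ℝ} (ht : 0 ≤ t) (hw : ContinuousOn w (Icc 0 t))
    (h : ∀ s ∈ Icc 0 t, m ≤ w s) : m * t ≤ ∫ s in (0:ℝ)..t, w s := by
  rw [← uIcc_of_le ht] at hw
  have := integral_mono_on (μ := MeasureTheory.volume) ht intervalIntegrable_const
    hw.intervalIntegrable h
  simpa [mul_comm] using this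

theorem norm_weightedAverage_sub_le {w w' : ℝ → ℝ} {φ φ' : ℝ → V} {t m K R δ : ℝ}
    (ht : 0 < t) (hm : 0 < m)
    (hw : ContinuousOn w (Icc 0 t)) (hw' : ContinuousOn w' (Icc 0 t))
    (hφ : ContinuousOn φ (Icc 0 t)) (hφ' : ContinuousOn φ' (Icc 0 t))
    (hw_mem : ∀ s ∈ Icc 0 t, m ≤ w s ∧ w s ≤ 1) (hw'_ge : ∀ s ∈ Icc 0 t, m ≤ w' s)
    (hφ'R : ∀ s ∈ Icc 0 t, ‖φ' s‖ ≤ R)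
    (hwδ : ∀ s ∈ Icc 0 t, |w s - w' s| ≤ K * δ) (hφδ : ∀ s ∈ Icc 0 t, ‖φ s - φ' s‖ ≤ δ) :
    ‖(∫ s in (0:ℝ)..t, w s)⁻¹ • (∫ s in (0:ℝ)..t, w s • φ s) -
        (∫ s in (0:ℝ)..t, w' s)⁻¹ • ∫ s in (0:ℝ)..t, w' s • φ' s‖ ≤
      (1 + 2 * K * R) / m * δ := by
  have h0 : (0:ℝ) ∈ Icc 0 t := ⟨le_rfl, ht.le⟩
  have hδ : 0 ≤ δ := (norm_nonneg _).trans (hφδ 0 h0)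
  have hKδ : 0 ≤ K * δ := (abs_nonneg _).trans (hwδ 0 h0)
  have hR : 0 ≤ R := (norm_nonneg _).trans (hφ'R 0 h0)
  have hI : m * t ≤ ∫ s in (0:ℝ)..t, w s :=
    mul_le_intervalIntegral ht.le hw fun s hs => (hw_mem s hs).1
  have hI' : m * t ≤ ∫ s in (0:ℝ)..t, w' s := mul_le_intervalIntegral ht.le hw' hw'_ge
  have hmt : 0 < m * t := mul_pos hm ht
  have hJ' : ‖∫ s in (0:ℝ)..t, w' s • φ' s‖ ≤ R * ∫ s in (0:ℝ)..t, w' s :=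
    norm_intervalIntegral_smul_le ht.le hw' hφ'
      (fun s hs => hm.le.trans (hw'_ge s hs)) hφ'R
  rw [← uIcc_of_le ht.le] at hw hw' hφ hφ'
  have hdI : |(∫ s in (0:ℝ)..t, w s) - ∫ s in (0:ℝ)..t, w' s| ≤ K * δ * t :=
    norm_intervalIntegral_sub_le ht.le hw.intervalIntegrable hw'.intervalIntegrable hwδ
  have hdJ : ‖(∫ s in (0:ℝ)..t, w s • φ s) - ∫ s in (0:ℝ)..t, w' s • φ' s‖ ≤
      (1 + K * R) * δ * t := by
    refine norm_intervalIntegral_sub_le ht.le (hw.smul hφ).intervalIntegrable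
      (hw'.smul hφ').intervalIntegrable fun s hs => ?_
    have hsplit : w s • φ s - w' s • φ' s = w s • (φ s - φ' s) + (w s - w' s) • φ' s := by
      rw [smul_sub, sub_smul]
      abel
    rw [hsplit]
    calc ‖w s • (φ s - φ' s) + (w s - w' s) • φ' s‖
        ≤ w s * ‖φ s - φ' s‖ + |w s - w' s| * ‖φ' s‖ := by
          refine (norm_add_le _ _).trans_eq ?_
          rw [norm_smul, norm_smul, Real.norm_eq_abs, Real.norm_eq_abs,
            abs_of_pos (hm.trans_le (hw_mem s hs).1)]
      _ ≤ 1 * δ + K * δ * R := by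
          gcongr
          exacts [(hw_mem s hs).2, hφδ s hs, hwδ s hs, hφ'R s hs]
      _ = (1 + K * R) * δ := by ring
  calc _ ≤ (‖(∫ s in (0:ℝ)..t, w s • φ s) - ∫ s in (0:ℝ)..t, w' s • φ' s‖ +
          R * |(∫ s in (0:ℝ)..t, w s) - ∫ s in (0:ℝ)..t, w' s|) / ∫ s in (0:ℝ)..t, w s :=
        norm_inv_smul_sub_inv_smul_le (hmt.trans_le hI) (hmt.trans_le hI') hJ'
    _ ≤ ((1 + K * R) * δ * t + R * (K * δ * t)) / (m * t) := by
        gcongr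
        nlinarith [mul_nonneg (mul_nonneg hR hKδ) ht.le, mul_nonneg hδ ht.le]
    _ = (1 + 2 * K * R) / m * δ := by field_simp; ring

end WeightedAverage

section Weights

variable {E : Type*} [NormedAddCommGroup E] {f : E → ℝ} {n L : ℝ}

lemma le_add_mul_of_abs_sub_le (hL : 0 ≤ L) {x : E} (hx : ‖x‖ ≤ n)
    (hfx : |f x - f 0| ≤ L * ‖x - 0‖) : f x ≤ f 0 + L * n := by
  rw [sub_zero] at hfx
  linarith [(abs_le.mp hfx).2, mul_le_mul_of_nonneg_left hx hL]

lemma abs_exp_neg_mul_sub_le {β : ℝ} (hβ : 0 ≤ β) (hfpos : ∀ x, 0 ≤ f x) {x y : E}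
    (hxy : |f x - f y| ≤ L * ‖x - y‖) :
    |Real.exp (-(β * f x)) - Real.exp (-(β * f y))| ≤ β * L * ‖x - y‖ := by
  have hx := mul_nonneg hβ (hfpos x)
  have hy := mul_nonneg hβ (hfpos y)
  calc _ ≤ |-(β * f x) - -(β * f y)| := abs_exp_sub_exp_le_of_nonpos (by linarith) (by linarith)
    _ = β * |f x - f y| := by
        rw [neg_sub_neg, abs_sub_comm, ← mul_sub, abs_mul, abs_of_nonneg hβ]
    _ ≤ β * L * ‖x - y‖ := by rw [mul_assoc]; gcongr

end Weights

theorem stmt_3_general (d : ℕ) (β n Lf : ℝ) (hβ : 0 < β) (hn : 0 < n) (hLf : 0 ≤ Lf)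
    (f : EuclideanSpace ℝ (Fin d) → ℝ) (hf : Continuous f) (hfpos : ∀ x, 0 ≤ f x)
    (hfLip : ∀ x y : EuclideanSpace ℝ (Fin d), ‖x‖ ≤ n → ‖y‖ ≤ n →
      |f x - f y| ≤ Lf * ‖x - y‖) :
    ∃ C₁ > 0, ∀ (φ φ' : ℝ → EuclideanSpace ℝ (Fin d)),
      ContinuousOn φ (Set.Ici 0) → ContinuousOn φ' (Set.Ici 0) →
      ∀ t : ℝ, 0 < t →
      (∀ s ∈ Set.Icc (0:ℝ) t, ‖φ s‖ ≤ n) → (∀ s ∈ Set.Icc (0:ℝ) t, ‖φ' s‖ ≤ n) →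
      ‖personalBest β f φ t - personalBest β f φ' t‖ ≤
        C₁ * ⨆ s : Set.Icc (0:ℝ) t, ‖φ s.1 - φ' s.1‖ := by
  refine ⟨(1 + 2 * (β * Lf) * n) / Real.exp (-(β * (f 0 + Lf * n))), by positivity, ?_⟩
  intro φ φ' hφ hφ' t ht hφn hφ'n
  have hsup : ∀ s ∈ Icc 0 t, ‖φ s - φ' s‖ ≤ ⨆ s : Icc (0:ℝ) t, ‖φ s.1 - φ' s.1‖ :=
    fun s hs => le_ciSup (f := fun s : Icc (0:ℝ) t => ‖φ s.1 - φ' s.1‖)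
      ⟨2 * n, by
        rintro _ ⟨s, rfl⟩
        linarith [norm_sub_le (φ s) (φ' s), hφn s s.2, hφ'n s s.2]⟩ ⟨s, hs⟩
  have hwc : Continuous fun x => Real.exp (-(β * f x)) := by fun_prop
  have hφc : ContinuousOn φ (Icc 0 t) := hφ.mono Icc_subset_Ici_self
  have hφ'c : ContinuousOn φ' (Icc 0 t) := hφ'.mono Icc_subset_Ici_self
  have hw_ge : ∀ x, ‖x‖ ≤ n → Real.exp (-(β * (f 0 + Lf * n))) ≤ Real.exp (-(β * f x)) :=
    fun x hx => Real.exp_le_exp.mpr <| neg_le_neg <|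
      mul_le_mul_of_nonneg_left
        (le_add_mul_of_abs_sub_le hLf hx (hfLip x 0 hx (by simpa using hn.le))) hβ.le
  simp only [personalBest, if_neg ht.ne']
  exact norm_weightedAverage_sub_le ht (Real.exp_pos _)
    (hwc.comp_continuousOn hφc) (hwc.comp_continuousOn hφ'c) hφc hφ'c
    (fun s hs => ⟨hw_ge _ (hφn s hs),
      Real.exp_le_one_iff.mpr (neg_nonpos.mpr (mul_nonneg hβ.le (hfpos _)))⟩)
    (fun s hs => hw_ge _ (hφ'n s hs)) hφ'n
    (fun s hs => (abs_exp_neg_mul_sub_le hβ.le hfpos (hfLip _ _ (hφn s hs) (hφ'n s hs))).trans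
      (by gcongr; exact hsup s hs))
    hsup

theorem stmt_3 (d : ℕ) (hd : 1 ≤ d) (β n Lf : ℝ) (hβ : 0 < β) (hn : 0 < n) (hLf : 0 ≤ Lf)
    (f : EuclideanSpace ℝ (Fin d) → ℝ) (hf : Continuous f) (hfpos : ∀ x, 0 ≤ f x)
    (hfLip : ∀ x y : EuclideanSpace ℝ (Fin d), ‖x‖ ≤ n → ‖y‖ ≤ n →
      |f x - f y| ≤ Lf * ‖x - y‖) :
    ∃ C₁ > 0, ∀ (φ φ' : ℝ → EuclideanSpace ℝ (Fin d)),
      ContinuousOn φ (Set.Ici 0) → ContinuousOn φ' (Set.Ici 0) →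
      ∀ t : ℝ, 0 < t →
      (∀ s ∈ Set.Icc (0:ℝ) t, ‖φ s‖ ≤ n) → (∀ s ∈ Set.Icc (0:ℝ) t, ‖φ' s‖ ≤ n) →
      ‖personalBest β f φ t - personalBest β f φ' t‖ ≤
        C₁ * ⨆ s : Set.Icc (0:ℝ) t, ‖φ s.1 - φ' s.1‖ :=
  stmt_3_general d β n Lf hβ hn hLf f hf hfpos hfLip
end

section
/- Let d, N ≥ 1, α > 0, n > 0, and let f : ℝ^d → ℝ be continuous with f ≥ 0 and Lipschitz continuous with constant L_f on B_n = {x ∈ ℝ^d : |x| ≤ n}. Then there exists a constant C > 0, depending only on α, n, N, L_f, and the infimum and supremum of f on B_n, such that for all x = (x^1,…,x^N), x̂ = (x̂^1,…,x̂^N) ∈ (ℝ^d)^N with |x^i| ≤ n and |x̂^i| ≤ n for every i, one has |v_f[x] − v_f[x̂]| ≤ C ∑_{i=1}^N |x^i − x̂^i|. -/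
/-!
The weighted average is the center of mass `(∑ wᵢ)⁻¹ • ∑ wᵢ • xᵢ` with weights
`wᵢ = exp (-α f(xᵢ))`. On the ball these weights lie in `[ε, 1]` with
`ε = exp (-α (f 0 + L_f n))`, and they are `α L_f`-Lipschitz in `xᵢ` because `exp ∘ (-·)` is
`1`-Lipschitz on `[0, ∞)`. Writing `c, c'` for the two centers of mass,
`c - c' = (∑ wᵢ)⁻¹ • ∑ (wᵢ • (xᵢ - x'ᵢ) + (wᵢ - w'ᵢ) • (x'ᵢ - c'))`,
and `‖x'ᵢ - c'‖ ≤ 2n` by convexity of the ball, so `C = (1 + 2 n α L_f) / ε` works.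
-/

open scoped BigOperators

open Finset

/-- The weighted average `v_f[x]` used in consensus-based optimization. -/
noncomputable def weightedAvg {d N : ℕ} (α : ℝ) (f : EuclideanSpace ℝ (Fin d) → ℝ)
    (x : Fin N → EuclideanSpace ℝ (Fin d)) : EuclideanSpace ℝ (Fin d) :=
  (∑ i, Real.exp (-(α * f (x i))))⁻¹ • ∑ i, Real.exp (-(α * f (x i))) • x i

theorem weightedAvg_eq_centerMass {d N : ℕ} (α : ℝ) (f : EuclideanSpace ℝ (Fin d) → ℝ)
    (x : Fin N → EuclideanSpace ℝ (Fin d)) :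
    weightedAvg α f x = univ.centerMass (fun i => Real.exp (-(α * f (x i)))) x :=
  rfl

theorem Real.abs_exp_neg_sub_exp_neg_le {a b : ℝ} (ha : 0 ≤ a) (hb : 0 ≤ b) :
    |Real.exp (-a) - Real.exp (-b)| ≤ |a - b| := by
  wlog hab : a ≤ b generalizing a b
  · rw [abs_sub_comm, abs_sub_comm a b]
    exact this hb ha (le_of_not_ge hab)
  have hsplit : Real.exp (-b) = Real.exp (-a) * Real.exp (-(b - a)) := by
    rw [← Real.exp_add]; ring_nf
  rw [abs_of_nonneg (by rw [sub_nonneg, Real.exp_le_exp]; linarith), abs_of_nonpos (by linarith),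
    hsplit]
  have h1 := Real.one_sub_le_exp_neg (b - a)
  have h2 : Real.exp (-a) ≤ 1 := Real.exp_le_one_iff.2 (by linarith)
  nlinarith [Real.exp_pos (-a)]

theorem Real.abs_exp_neg_mul_sub_exp_neg_mul_le {α a b : ℝ} (hα : 0 ≤ α) (ha : 0 ≤ a)
    (hb : 0 ≤ b) : |Real.exp (-(α * a)) - Real.exp (-(α * b))| ≤ α * |a - b| := by
  calc |Real.exp (-(α * a)) - Real.exp (-(α * b))| ≤ |α * a - α * b| :=
        Real.abs_exp_neg_sub_exp_neg_le (mul_nonneg hα ha) (mul_nonneg hα hb)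
    _ = α * |a - b| := by rw [← mul_sub, abs_mul, abs_of_nonneg hα]

namespace Finset

theorem centerMass_sub_centerMass {ι R E : Type*} [Field R] [AddCommGroup E] [Module R E]
    (t : Finset ι) {w w' : ι → R} {x x' : ι → E}
    (hw : ∑ i ∈ t, w i ≠ 0) (hw' : ∑ i ∈ t, w' i ≠ 0) :
    t.centerMass w x - t.centerMass w' x' = (∑ i ∈ t, w i)⁻¹ •
      ∑ i ∈ t, (w i • (x i - x' i) + (w i - w' i) • (x' i - t.centerMass w' x')) := by
  have hmass : (∑ i ∈ t, w' i) • t.centerMass w' x' = ∑ i ∈ t, w' i • x' i :=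
    smul_inv_smul₀ hw' _
  simp only [smul_sub, sub_smul, sum_add_distrib, sum_sub_distrib, ← sum_smul, hmass,
    smul_add, inv_smul_smul₀ hw]
  rw [centerMass]
  abel

section Normed

variable {ι E : Type*} [NormedAddCommGroup E] [NormedSpace ℝ E] (t : Finset ι)
  {w w' : ι → ℝ} {x x' : ι → E}

theorem norm_centerMass_le {r : ℝ} (hw₀ : ∀ i ∈ t, 0 ≤ w i) (hw : 0 < ∑ i ∈ t, w i)
    (hx : ∀ i ∈ t, ‖x i‖ ≤ r) : ‖t.centerMass w x‖ ≤ r :=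
  mem_closedBall_zero_iff.1 <| (convex_closedBall 0 r).centerMass_mem hw₀ hw
    fun i hi => mem_closedBall_zero_iff.2 (hx i hi)

theorem norm_centerMass_sub_centerMass_le {ε K r : ℝ} (hε : 0 < ε) (hw : ε ≤ ∑ i ∈ t, w i)
    (hw'₀ : ∀ i ∈ t, 0 ≤ w' i) (hw' : 0 < ∑ i ∈ t, w' i) (hw₁ : ∀ i ∈ t, |w i| ≤ 1)
    (hK : ∀ i ∈ t, |w i - w' i| ≤ K * ‖x i - x' i‖)
    (hx' : ∀ i ∈ t, ‖x' i‖ ≤ r) :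
    ‖t.centerMass w x - t.centerMass w' x'‖ ≤ (1 + 2 * r * K) / ε * ∑ i ∈ t, ‖x i - x' i‖ := by
  have hS : 0 < ∑ i ∈ t, w i := hε.trans_le hw
  have hterm : ∀ i ∈ t, ‖w i • (x i - x' i) + (w i - w' i) • (x' i - t.centerMass w' x')‖ ≤
      (1 + 2 * r * K) * ‖x i - x' i‖ := fun i hi => by
    have hdist : ‖x' i - t.centerMass w' x'‖ ≤ 2 * r := by
      linarith [norm_sub_le (x' i) (t.centerMass w' x'), hx' i hi,
        norm_centerMass_le t hw'₀ hw' hx']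
    calc ‖w i • (x i - x' i) + (w i - w' i) • (x' i - t.centerMass w' x')‖
      _ ≤ |w i| * ‖x i - x' i‖ + |w i - w' i| * ‖x' i - t.centerMass w' x'‖ := by
          simpa only [norm_smul, Real.norm_eq_abs] using
            norm_add_le (w i • (x i - x' i)) ((w i - w' i) • (x' i - t.centerMass w' x'))
      _ ≤ 1 * ‖x i - x' i‖ + K * ‖x i - x' i‖ * (2 * r) :=
          add_le_add (mul_le_mul_of_nonneg_right (hw₁ i hi) (norm_nonneg _))
            (mul_le_mul (hK i hi) hdist (norm_nonneg _) ((abs_nonneg _).trans (hK i hi)))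
      _ = (1 + 2 * r * K) * ‖x i - x' i‖ := by ring
  rw [centerMass_sub_centerMass t hS.ne' hw'.ne', norm_smul, Real.norm_eq_abs,
    abs_of_pos (inv_pos.2 hS), div_eq_inv_mul, mul_assoc, mul_sum]
  exact mul_le_mul (inv_anti₀ hε hw) ((norm_sum_le _ _).trans (sum_le_sum hterm))
    (norm_nonneg _) (inv_nonneg.2 hε.le)

end Normed

end Finset

theorem stmt_5_general (d N : ℕ) (hN : 1 ≤ N)
    (α n Lf : ℝ) (hα : 0 < α) (hn : 0 < n) (hLf : 0 ≤ Lf)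
    (f : EuclideanSpace ℝ (Fin d) → ℝ) (hfpos : ∀ x, 0 ≤ f x)
    (hfLip : ∀ x y : EuclideanSpace ℝ (Fin d), ‖x‖ ≤ n → ‖y‖ ≤ n →
      |f x - f y| ≤ Lf * ‖x - y‖) :
    ∃ C > 0, ∀ x x' : Fin N → EuclideanSpace ℝ (Fin d),
      (∀ i, ‖x i‖ ≤ n) → (∀ i, ‖x' i‖ ≤ n) →
      ‖weightedAvg α f x - weightedAvg α f x'‖ ≤ C * ∑ i, ‖x i - x' i‖ := by
  set ε := Real.exp (-(α * (f 0 + Lf * n)))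
  have hε : 0 < ε := Real.exp_pos _
  have hf_le : ∀ z, ‖z‖ ≤ n → f z ≤ f 0 + Lf * n := fun z hz => by
    have := (abs_le.1 (hfLip z 0 hz (by simpa using hn.le))).2
    rw [sub_zero] at this
    nlinarith
  have hsum : ∀ y : Fin N → EuclideanSpace ℝ (Fin d), (∀ i, ‖y i‖ ≤ n) →
      ε ≤ ∑ i, Real.exp (-(α * f (y i))) := fun y hy =>
    (Real.exp_le_exp.2 (neg_le_neg (mul_le_mul_of_nonneg_left (hf_le _ (hy ⟨0, hN⟩)) hα.le))).trans
      (single_le_sum (f := fun i => Real.exp (-(α * f (y i)))) (fun i _ => (Real.exp_pos _).le)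
        (mem_univ _))
  refine ⟨(1 + 2 * n * (α * Lf)) / ε, div_pos (by positivity) hε, fun x x' hx hx' => ?_⟩
  rw [weightedAvg_eq_centerMass, weightedAvg_eq_centerMass]
  refine norm_centerMass_sub_centerMass_le univ hε (hsum x hx) (fun i _ => (Real.exp_pos _).le)
    (hε.trans_le (hsum x' hx')) (fun i _ => ?_) (fun i _ => ?_) (fun i _ => hx' i)
  · rw [abs_of_pos (Real.exp_pos _), Real.exp_le_one_iff, neg_nonpos]
    exact mul_nonneg hα.le (hfpos _)
  · calc _ ≤ α * |f (x i) - f (x' i)| :=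
          Real.abs_exp_neg_mul_sub_exp_neg_mul_le hα.le (hfpos _) (hfpos _)
      _ ≤ α * (Lf * ‖x i - x' i‖) := by gcongr; exact hfLip _ _ (hx i) (hx' i)
      _ = α * Lf * ‖x i - x' i‖ := by ring

theorem stmt_5 (d N : ℕ) (hd : 1 ≤ d) (hN : 1 ≤ N)
    (α n Lf : ℝ) (hα : 0 < α) (hn : 0 < n) (hLf : 0 ≤ Lf)
    (f : EuclideanSpace ℝ (Fin d) → ℝ) (hf : Continuous f) (hfpos : ∀ x, 0 ≤ f x)
    (hfLip : ∀ x y : EuclideanSpace ℝ (Fin d), ‖x‖ ≤ n → ‖y‖ ≤ n →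
      |f x - f y| ≤ Lf * ‖x - y‖) :
    ∃ C > 0, ∀ x x' : Fin N → EuclideanSpace ℝ (Fin d),
      (∀ i, ‖x i‖ ≤ n) → (∀ i, ‖x' i‖ ≤ n) →
      ‖weightedAvg α f x - weightedAvg α f x'‖ ≤ C * ∑ i, ‖x i - x' i‖ :=
  stmt_5_general d N hN α n Lf hα hn hLf f hfpos hfLip
end

section
/- Let d, N ≥ 1, α > 0, n > 0, and let f : ℝ^d → ℝ be continuous with f ≥ 0 and Lipschitz continuous with constant L_f on B_n = {x ∈ ℝ^d : |x| ≤ n}. Then there exists a constant C₂ > 0, depending only on α, n, N, L_f, and the infimum and supremum of f on B_n, such that for all x, x̂ ∈ (ℝ^d)^N with |x^i| ≤ n and |x̂^i| ≤ n for every i, one has the squared Lipschitz estimate |v_f[x] − v_f[x̂]|² ≤ C₂ |x − x̂|², where |x − x̂|² = ∑_{i=1}^N |x^i − x̂^i|². -/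
open scoped BigOperators

/-- exp is 1-Lipschitz on the nonpositive reals. -/
lemma expNeg_lip (a b : ℝ) (ha : 0 ≤ a) (hb : 0 ≤ b) :
    |Real.exp (-a) - Real.exp (-b)| ≤ |a - b| := by
  have key : ∀ a b : ℝ, 0 ≤ b → b ≤ a → Real.exp (-b) - Real.exp (-a) ≤ a - b := by
    intro a b hb hba
    have e1 : Real.exp (-b) ≤ 1 := by
      calc Real.exp (-b) ≤ Real.exp 0 := Real.exp_le_exp.mpr (by linarith)
        _ = 1 := Real.exp_zero
    have e2 : -(a - b) + 1 ≤ Real.exp (-(a - b)) := Real.add_one_le_exp _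
    have e3 : Real.exp (-a) = Real.exp (-b) * Real.exp (-(a - b)) := by
      rw [← Real.exp_add]; ring_nf
    have e4 : Real.exp (-(a - b)) ≤ 1 := by
      calc Real.exp (-(a - b)) ≤ Real.exp 0 := Real.exp_le_exp.mpr (by linarith)
        _ = 1 := Real.exp_zero
    nlinarith [Real.exp_pos (-b)]
  rcases le_total b a with h | h
  · have hmono : Real.exp (-a) ≤ Real.exp (-b) := Real.exp_le_exp.mpr (by linarith)
    rw [abs_of_nonpos (sub_nonpos.mpr hmono), abs_of_nonneg (sub_nonneg.mpr h)]
    linarith [key a b hb h]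
  · have hmono : Real.exp (-b) ≤ Real.exp (-a) := Real.exp_le_exp.mpr (by linarith)
    rw [abs_of_nonneg (sub_nonneg.mpr hmono), abs_of_nonpos (sub_nonpos.mpr h)]
    linarith [key b a ha h]

/-- Main quantitative lemma on the weighted average, in abstract form. -/
lemma weightedAvg_key {E : Type*} [NormedAddCommGroup E] [NormedSpace ℝ E]
    {N : ℕ} (hN : 1 ≤ N) (w w' : Fin N → E → ℝ) (x x' : Fin N → E)
    (n c e : ℝ) (hn : 0 < n) (he : 0 < e) (hc : 0 ≤ c)
    (W W' : Fin N → ℝ)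
    (hwlb : ∀ i, e ≤ W i) (hwub : ∀ i, W i ≤ 1)
    (hw'lb : ∀ i, e ≤ W' i) (hw'ub : ∀ i, W' i ≤ 1)
    (hx : ∀ i, ‖x i‖ ≤ n) (hx' : ∀ i, ‖x' i‖ ≤ n)
    (hdw : ∀ i, |W i - W' i| ≤ c * ‖x i - x' i‖) :
    ‖(∑ i, W i)⁻¹ • ∑ i, W i • x i - (∑ i, W' i)⁻¹ • ∑ i, W' i • x' i‖ ≤
      (e⁻¹ * (c * n + 1) + (e⁻¹) ^ 2 * c * (N * n)) * ∑ i, ‖x i - x' i‖ := by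
  set S := ∑ i, W i with hS
  set S' := ∑ i, W' i with hS'
  set u := ∑ i, W i • x i with hu_def
  set u' := ∑ i, W' i • x' i with hu'_def
  set T := ∑ i, ‖x i - x' i‖ with hT
  have hN1 : (1 : ℝ) ≤ N := by exact_mod_cast hN
  have hT0 : 0 ≤ T := by
    rw [hT]; exact Finset.sum_nonneg fun i _ => norm_nonneg _
  have hNe : (N : ℝ) * e ≤ S := by
    have h := Finset.card_nsmul_le_sum (Finset.univ : Finset (Fin N)) W e
      (fun i _ => hwlb i)
    simpa [nsmul_eq_mul, Finset.card_univ] using h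
  have hSe : e ≤ S := le_trans (by nlinarith) hNe
  have hN'e : (N : ℝ) * e ≤ S' := by
    have h := Finset.card_nsmul_le_sum (Finset.univ : Finset (Fin N)) W' e
      (fun i _ => hw'lb i)
    simpa [nsmul_eq_mul, Finset.card_univ] using h
  have hS'e : e ≤ S' := le_trans (by nlinarith) hN'e
  have hSpos : 0 < S := lt_of_lt_of_le he hSe
  have hS'pos : 0 < S' := lt_of_lt_of_le he hS'e
  have hSinv : S⁻¹ ≤ e⁻¹ := by
    apply inv_anti₀ he hSe
  have hS'inv : S'⁻¹ ≤ e⁻¹ := by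
    apply inv_anti₀ he hS'e
  -- difference of total weights
  have hsub : |S' - S| ≤ c * T := by
    have h1 : S' - S = ∑ i, (W' i - W i) := by
      rw [hS, hS', ← Finset.sum_sub_distrib]
    rw [h1]
    calc |∑ i, (W' i - W i)| ≤ ∑ i, |W' i - W i| := Finset.abs_sum_le_sum_abs _ _
      _ ≤ ∑ i, c * ‖x i - x' i‖ := Finset.sum_le_sum fun i _ => by
            rw [abs_sub_comm]; exact hdw i
      _ = c * T := by rw [hT, Finset.mul_sum]
  have hinvdiff : |S⁻¹ - S'⁻¹| ≤ e⁻¹ ^ 2 * (c * T) := by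
    have h1 : S⁻¹ - S'⁻¹ = (S' - S) * (S⁻¹ * S'⁻¹) := by
      field_simp
    rw [h1, abs_mul]
    have h2 : |S⁻¹ * S'⁻¹| ≤ e⁻¹ ^ 2 := by
      rw [abs_mul, abs_of_pos (inv_pos.mpr hSpos), abs_of_pos (inv_pos.mpr hS'pos), sq]
      exact mul_le_mul hSinv hS'inv (inv_pos.mpr hS'pos).le (inv_pos.mpr he).le
    calc |S' - S| * |S⁻¹ * S'⁻¹| ≤ (c * T) * (e⁻¹ ^ 2) :=
          mul_le_mul hsub h2 (abs_nonneg _) (by positivity)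
      _ = e⁻¹ ^ 2 * (c * T) := by ring
  -- norm of u'
  have hu'n : ‖u'‖ ≤ (N : ℝ) * n := by
    rw [hu'_def]
    calc ‖∑ i, W' i • x' i‖ ≤ ∑ i, ‖W' i • x' i‖ := norm_sum_le _ _
      _ ≤ ∑ _i : Fin N, n := Finset.sum_le_sum fun i _ => by
            rw [norm_smul, Real.norm_eq_abs,
              abs_of_pos (lt_of_lt_of_le he (hw'lb i))]
            nlinarith [hx' i, norm_nonneg (x' i), hw'ub i, hw'lb i]
      _ = (N : ℝ) * n := by
            simp [Finset.sum_const, Finset.card_univ, nsmul_eq_mul]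
  -- norm of u - u'
  have huu' : ‖u - u'‖ ≤ (c * n + 1) * T := by
    have h1 : u - u' = ∑ i, (W i • x i - W' i • x' i) := by
      rw [hu_def, hu'_def, ← Finset.sum_sub_distrib]
    rw [h1]
    calc ‖∑ i, (W i • x i - W' i • x' i)‖ ≤ ∑ i, ‖W i • x i - W' i • x' i‖ :=
          norm_sum_le _ _
      _ ≤ ∑ i, (c * n + 1) * ‖x i - x' i‖ := by
          refine Finset.sum_le_sum fun i _ => ?_
          have e1 : W i • x i - W' i • x' i
              = (W i - W' i) • x i + W' i • (x i - x' i) := by module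
          have hw'abs : |W' i| ≤ 1 := by
            rw [abs_of_pos (lt_of_lt_of_le he (hw'lb i))]; exact hw'ub i
          calc ‖W i • x i - W' i • x' i‖
              ≤ ‖(W i - W' i) • x i‖ + ‖W' i • (x i - x' i)‖ := by
                rw [e1]; exact norm_add_le _ _
            _ = |W i - W' i| * ‖x i‖ + |W' i| * ‖x i - x' i‖ := by
                rw [norm_smul, norm_smul, Real.norm_eq_abs, Real.norm_eq_abs]
            _ ≤ (c * ‖x i - x' i‖) * n + 1 * ‖x i - x' i‖ := by
                refine add_le_add (mul_le_mul (hdw i) (hx i) (norm_nonneg _)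
                  (by positivity)) (mul_le_mul hw'abs le_rfl (norm_nonneg _)
                  zero_le_one)
            _ = (c * n + 1) * ‖x i - x' i‖ := by ring
      _ = (c * n + 1) * T := by rw [hT, Finset.mul_sum]
  -- decompose
  have hv : S⁻¹ • u - S'⁻¹ • u' = S⁻¹ • (u - u') + (S⁻¹ - S'⁻¹) • u' := by module
  rw [hv]
  calc ‖S⁻¹ • (u - u') + (S⁻¹ - S'⁻¹) • u'‖
      ≤ ‖S⁻¹ • (u - u')‖ + ‖(S⁻¹ - S'⁻¹) • u'‖ := norm_add_le _ _
    _ = |S⁻¹| * ‖u - u'‖ + |S⁻¹ - S'⁻¹| * ‖u'‖ := by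
        rw [norm_smul, norm_smul, Real.norm_eq_abs, Real.norm_eq_abs]
    _ ≤ e⁻¹ * ((c * n + 1) * T) + (e⁻¹ ^ 2 * (c * T)) * ((N : ℝ) * n) := by
        refine add_le_add ?_ ?_
        · rw [abs_of_pos (inv_pos.mpr hSpos)]
          exact mul_le_mul hSinv huu' (norm_nonneg _) (inv_pos.mpr he).le
        · exact mul_le_mul hinvdiff hu'n (norm_nonneg _) (by positivity)
    _ = (e⁻¹ * (c * n + 1) + (e⁻¹) ^ 2 * c * (N * n)) * T := by ring

theorem stmt_6 (d N : ℕ) (hd : 1 ≤ d) (hN : 1 ≤ N)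
    (α n Lf : ℝ) (hα : 0 < α) (hn : 0 < n) (hLf : 0 ≤ Lf)
    (f : EuclideanSpace ℝ (Fin d) → ℝ) (hf : Continuous f) (hfpos : ∀ x, 0 ≤ f x)
    (hfLip : ∀ x y : EuclideanSpace ℝ (Fin d), ‖x‖ ≤ n → ‖y‖ ≤ n →
      |f x - f y| ≤ Lf * ‖x - y‖) :
    ∃ C₂ > 0, ∀ x x' : Fin N → EuclideanSpace ℝ (Fin d),
      (∀ i, ‖x i‖ ≤ n) → (∀ i, ‖x' i‖ ≤ n) →
      ‖weightedAvg α f x - weightedAvg α f x'‖ ^ 2 ≤ C₂ * ∑ i, ‖x i - x' i‖ ^ 2 := by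
  classical
  have hN0 : (0 : ℝ) < N := by exact_mod_cast hN
  -- bound of f on the ball
  set M : ℝ := f 0 + Lf * n with hM
  have h0n : ‖(0 : EuclideanSpace ℝ (Fin d))‖ ≤ n := by simp [hn.le]
  have hfle : ∀ y : EuclideanSpace ℝ (Fin d), ‖y‖ ≤ n → f y ≤ M := by
    intro y hy
    have h := (abs_le.mp (hfLip y 0 hy h0n)).2
    have h2 : ‖y - 0‖ ≤ n := by simpa using hy
    have h3 : Lf * ‖y - 0‖ ≤ Lf * n := mul_le_mul_of_nonneg_left h2 hLf
    rw [hM]; linarith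
  set e : ℝ := Real.exp (-(α * M)) with he_def
  have he : 0 < e := Real.exp_pos _
  set K : ℝ := e⁻¹ * (α * Lf * n + 1) + (e⁻¹) ^ 2 * (α * Lf) * (N * n) with hK
  have hKpos : 0 < K := by
    have h1 : 0 < e⁻¹ * (α * Lf * n + 1) := by positivity
    have h2 : 0 ≤ (e⁻¹) ^ 2 * (α * Lf) * (N * n) := by positivity
    rw [hK]; linarith
  refine ⟨(N : ℝ) * K ^ 2, by positivity, ?_⟩
  intro x x' hx hx'
  -- weight bounds
  have hwlb : ∀ i, e ≤ Real.exp (-(α * f (x i))) := fun i => by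
    rw [he_def]
    exact Real.exp_le_exp.mpr (by nlinarith [hfle (x i) (hx i)])
  have hwub : ∀ i, Real.exp (-(α * f (x i))) ≤ 1 := fun i => by
    calc Real.exp (-(α * f (x i))) ≤ Real.exp 0 :=
          Real.exp_le_exp.mpr (by nlinarith [hfpos (x i)])
      _ = 1 := Real.exp_zero
  have hw'lb : ∀ i, e ≤ Real.exp (-(α * f (x' i))) := fun i => by
    rw [he_def]
    exact Real.exp_le_exp.mpr (by nlinarith [hfle (x' i) (hx' i)])
  have hw'ub : ∀ i, Real.exp (-(α * f (x' i))) ≤ 1 := fun i => by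
    calc Real.exp (-(α * f (x' i))) ≤ Real.exp 0 :=
          Real.exp_le_exp.mpr (by nlinarith [hfpos (x' i)])
      _ = 1 := Real.exp_zero
  have hdw : ∀ i, |Real.exp (-(α * f (x i))) - Real.exp (-(α * f (x' i)))|
      ≤ (α * Lf) * ‖x i - x' i‖ := by
    intro i
    have h := expNeg_lip (α * f (x i)) (α * f (x' i))
      (by nlinarith [hfpos (x i)]) (by nlinarith [hfpos (x' i)])
    have h2 : |α * f (x i) - α * f (x' i)| = α * |f (x i) - f (x' i)| := by
      rw [← mul_sub, abs_mul, abs_of_pos hα]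
    have h3 := hfLip (x i) (x' i) (hx i) (hx' i)
    calc |Real.exp (-(α * f (x i))) - Real.exp (-(α * f (x' i)))|
        ≤ |α * f (x i) - α * f (x' i)| := h
      _ = α * |f (x i) - f (x' i)| := h2
      _ ≤ α * (Lf * ‖x i - x' i‖) := by nlinarith [abs_nonneg (f (x i) - f (x' i))]
      _ = (α * Lf) * ‖x i - x' i‖ := by ring
  have hlin : ‖weightedAvg α f x - weightedAvg α f x'‖ ≤ K * ∑ i, ‖x i - x' i‖ := by
    have h := weightedAvg_key hN (fun _ _ => (0:ℝ)) (fun _ _ => (0:ℝ)) x x'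
      n (α * Lf) e hn he (by positivity)
      (fun i => Real.exp (-(α * f (x i)))) (fun i => Real.exp (-(α * f (x' i))))
      hwlb hwub hw'lb hw'ub hx hx' hdw
    simpa only [weightedAvg, hK] using h
  have hT0 : 0 ≤ ∑ i, ‖x i - x' i‖ := Finset.sum_nonneg fun i _ => norm_nonneg _
  have hsq : ‖weightedAvg α f x - weightedAvg α f x'‖ ^ 2
      ≤ (K * ∑ i, ‖x i - x' i‖) ^ 2 := by
    have := pow_le_pow_left₀ (norm_nonneg _) hlin 2
    exact this
  have hcheb : (∑ i, ‖x i - x' i‖) ^ 2 ≤ (N : ℝ) * ∑ i, ‖x i - x' i‖ ^ 2 := by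
    have h := sq_sum_le_card_mul_sum_sq (s := (Finset.univ : Finset (Fin N)))
      (f := fun i => ‖x i - x' i‖)
    simpa [Finset.card_univ] using h
  calc ‖weightedAvg α f x - weightedAvg α f x'‖ ^ 2
      ≤ (K * ∑ i, ‖x i - x' i‖) ^ 2 := hsq
    _ = K ^ 2 * (∑ i, ‖x i - x' i‖) ^ 2 := by ring
    _ ≤ K ^ 2 * ((N : ℝ) * ∑ i, ‖x i - x' i‖ ^ 2) := by
        exact mul_le_mul_of_nonneg_left hcheb (by positivity)
    _ = (N : ℝ) * K ^ 2 * ∑ i, ‖x i - x' i‖ ^ 2 := by ring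
end

section
/- Let d, N ≥ 1, α > 0, and let f : ℝ^d → ℝ be continuous with f ≥ 0 and Lipschitz continuous on every ball B_n = {x : |x| ≤ n}. Then for every R > 0 there exists a constant ℓ_R > 0 such that for all x, y ∈ (ℝ^d)^N with |x| ≤ R and |y| ≤ R one has (∑_{i=1}^N |(x^i − v_f[x]) − (y^i − v_f[y])|²)^{1/2} ≤ ℓ_R |x − y|, where |x − y|² = ∑_{i=1}^N |x^i − y^i|². -/
open scoped BigOperators

/-!
Every ingredient of `x ↦ (x^i - v_f[x])_i` is locally Lipschitz: `f` by hypothesis, `exp` and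
scalar multiplication because they are `C¹`, and the reciprocal of the total weight because that
weight is positive and `t ↦ t⁻¹` is `C¹` away from `0`. A locally Lipschitz map is Lipschitz on the compact ball of radius `R` in `(ℝ^d)^N`,
whose `ℓ²` norm is the norm of `PiLp 2`.
-/

open Metric Set Filter

section LocallyLipschitz

variable {X E : Type*} [PseudoMetricSpace X] [NormedAddCommGroup E]

lemma LocallyLipschitz.of_lipschitzOnWith_closedBall {Y : Type*} [PseudoEMetricSpace Y]
    {f : X → Y} (x₀ : X) (h : ∀ r > 0, ∃ K, LipschitzOnWith K f (closedBall x₀ r)) :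
    LocallyLipschitz f := by
  intro x
  obtain ⟨K, hK⟩ := h (dist x x₀ + 1) (by positivity)
  exact ⟨K, _, closedBall_mem_nhds_of_mem (by simp [mem_ball]), hK⟩

lemma LocallyLipschitz.finset_sum {ι : Type*} (s : Finset ι) {u : ι → X → E}
    (hu : ∀ i ∈ s, LocallyLipschitz (u i)) : LocallyLipschitz fun x ↦ ∑ i ∈ s, u i x := by
  classical
  induction s using Finset.induction_on with
  | empty => simpa using LocallyLipschitz.const (0 : E)
  | insert i s hi ih =>
    simp_rw [Finset.sum_insert hi]
    exact (hu i (s.mem_insert_self i)).add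
      (ih fun j hj ↦ hu j (Finset.mem_insert_of_mem hj))

lemma LocallyLipschitz.smul [NormedSpace ℝ E] {u : X → ℝ} {v : X → E} (hu : LocallyLipschitz u)
    (hv : LocallyLipschitz v) : LocallyLipschitz fun x ↦ u x • v x :=
  (contDiff_smul (𝕜 := ℝ) (n := 1)).locallyLipschitz.comp (hu.prodMk hv)

lemma LocallyLipschitz.inv₀ {u : X → ℝ} (hu : LocallyLipschitz u) (h : ∀ x, u x ≠ 0) :
    LocallyLipschitz fun x ↦ (u x)⁻¹ := by
  intro x
  obtain ⟨Kinv, t, ht, hinv⟩ := (contDiffAt_inv ℝ (h x) (n := 1)).exists_lipschitzOnWith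
  obtain ⟨Ku, s, hs, hus⟩ := hu x
  exact ⟨Kinv * Ku, s ∩ u ⁻¹' t, inter_mem hs (hu.continuous.continuousAt ht),
    hinv.comp (hus.mono inter_subset_left) ((mapsTo_preimage u t).mono_left inter_subset_right)⟩

end LocallyLipschitz

lemma locallyLipschitz_weightedAvg {d N : ℕ} [NeZero N] (α : ℝ)
    {f : EuclideanSpace ℝ (Fin d) → ℝ} (hf : LocallyLipschitz f) :
    LocallyLipschitz (weightedAvg (N := N) α f) := by
  have hx (i : Fin N) : LocallyLipschitz fun x : Fin N → EuclideanSpace ℝ (Fin d) ↦ x i :=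
    (LipschitzWith.eval i).locallyLipschitz
  have hw (i : Fin N) : LocallyLipschitz fun x : Fin N → EuclideanSpace ℝ (Fin d) ↦
      Real.exp (-(α * f (x i))) :=
    (show ContDiff ℝ 1 fun t ↦ Real.exp (-(α * t)) by fun_prop).locallyLipschitz.comp
      (hf.comp (hx i))
  have hW_pos (x : Fin N → EuclideanSpace ℝ (Fin d)) : 0 < ∑ i, Real.exp (-(α * f (x i))) :=
    Finset.sum_pos (fun i _ ↦ Real.exp_pos _) Finset.univ_nonempty
  exact ((LocallyLipschitz.finset_sum _ fun i _ ↦ hw i).inv₀ fun x ↦ (hW_pos x).ne').smul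
    (LocallyLipschitz.finset_sum _ fun i _ ↦ (hw i).smul (hx i))

lemma locallyLipschitz_sub_weightedAvg {d N : ℕ} [NeZero N] (α : ℝ)
    {f : EuclideanSpace ℝ (Fin d) → ℝ} (hf : LocallyLipschitz f) :
    LocallyLipschitz fun z : PiLp 2 (fun _ : Fin N ↦ EuclideanSpace ℝ (Fin d)) ↦
      z - WithLp.toLp 2 (fun _ ↦ weightedAvg α f z.ofLp) := by
  have hconst : LipschitzWith 1 fun e : EuclideanSpace ℝ (Fin d) ↦ fun _ : Fin N ↦ e :=
    .of_dist_le_mul fun a b ↦ by simp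
  exact LocallyLipschitz.id.sub (((PiLp.lipschitzWith_toLp 2 _).comp hconst).locallyLipschitz.comp
    ((locallyLipschitz_weightedAvg α hf).comp (PiLp.lipschitzWith_ofLp 2 _).locallyLipschitz))

theorem stmt_11_general (d N : ℕ) (hN : 1 ≤ N) (α : ℝ)
    (f : EuclideanSpace ℝ (Fin d) → ℝ) (Lf : ℝ → ℝ)
    (hfLip : ∀ n : ℝ, 0 < n → ∀ x y : EuclideanSpace ℝ (Fin d), ‖x‖ ≤ n → ‖y‖ ≤ n →
      |f x - f y| ≤ Lf n * ‖x - y‖) :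
    ∀ R : ℝ, 0 < R → ∃ ℓ > 0, ∀ x y : Fin N → EuclideanSpace ℝ (Fin d),
      Real.sqrt (∑ i, ‖x i‖ ^ 2) ≤ R → Real.sqrt (∑ i, ‖y i‖ ^ 2) ≤ R →
      Real.sqrt (∑ i, ‖(x i - weightedAvg α f x) - (y i - weightedAvg α f y)‖ ^ 2) ≤
        ℓ * Real.sqrt (∑ i, ‖x i - y i‖ ^ 2) := by
  intro R _
  have : NeZero N := ⟨by omega⟩
  have hf : LocallyLipschitz f := .of_lipschitzOnWith_closedBall 0 fun r hr ↦
    ⟨_, .of_dist_le' fun x hx y hy ↦ by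
      simpa [dist_eq_norm] using hfLip r hr x y (by simpa using hx) (by simpa using hy)⟩
  obtain ⟨K, hK⟩ := (locallyLipschitz_sub_weightedAvg (N := N) α hf).locallyLipschitzOn
    |>.exists_lipschitzOnWith_of_compact (isCompact_closedBall 0 R)
  refine ⟨K + 1, by positivity, fun x y hx hy ↦ ?_⟩
  have hxy := hK.dist_le_mul (WithLp.toLp 2 x) (by simpa [PiLp.norm_eq_of_L2] using hx)
    (WithLp.toLp 2 y) (by simpa [PiLp.norm_eq_of_L2] using hy)
  rw [PiLp.dist_eq_of_L2, PiLp.dist_eq_of_L2] at hxy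
  simp only [dist_eq_norm] at hxy
  calc _ ≤ K * Real.sqrt (∑ i, ‖x i - y i‖ ^ 2) := hxy
    _ ≤ (K + 1) * Real.sqrt (∑ i, ‖x i - y i‖ ^ 2) := by gcongr; linarith

theorem stmt_11 (d N : ℕ) (hd : 1 ≤ d) (hN : 1 ≤ N) (α : ℝ) (hα : 0 < α)
    (f : EuclideanSpace ℝ (Fin d) → ℝ) (hf : Continuous f) (hfpos : ∀ x, 0 ≤ f x)
    (Lf : ℝ → ℝ)
    (hfLip : ∀ n : ℝ, 0 < n → ∀ x y : EuclideanSpace ℝ (Fin d), ‖x‖ ≤ n → ‖y‖ ≤ n →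
      |f x - f y| ≤ Lf n * ‖x - y‖) :
    ∀ R : ℝ, 0 < R → ∃ ℓ > 0, ∀ x y : Fin N → EuclideanSpace ℝ (Fin d),
      Real.sqrt (∑ i, ‖x i‖ ^ 2) ≤ R → Real.sqrt (∑ i, ‖y i‖ ^ 2) ≤ R →
      Real.sqrt (∑ i, ‖(x i - weightedAvg α f x) - (y i - weightedAvg α f y)‖ ^ 2) ≤
        ℓ * Real.sqrt (∑ i, ‖x i - y i‖ ^ 2) :=
  stmt_11_general d N hN α f Lf hfLip
end

section
/- Let d, N ≥ 1, α > 0, λ ≥ 0, σ ∈ ℝ, and let f : ℝ^d → ℝ be any function. For x = (x^1,…,x^N) ∈ (ℝ^d)^N let V[x] = (v_f[x], …, v_f[x]) ∈ (ℝ^d)^N. Then −2λ ⟨x, x − V[x]⟩ + 2σ² ∑_{j=1}^N |x^j − v_f[x]|² ≤ (2λ√N + 4σ²(1 + N)) |x|², where ⟨·,·⟩ is the Euclidean inner product on ℝ^{dN} and |x|² = ∑_{i=1}^N |x^i|². (This is the key coercivity inequality in the proof of well-posedness of consensus-based optimization with component-wise diffusion; note that the bound is independent of the dimension d.) -/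
open scoped BigOperators RealInnerProductSpace

lemma weightedAvg_norm_le {d N : ℕ} (hN : 1 ≤ N) (α : ℝ) (f : EuclideanSpace ℝ (Fin d) → ℝ)
    (x : Fin N → EuclideanSpace ℝ (Fin d)) :
    ‖weightedAvg α f x‖ ≤ Real.sqrt (∑ i, ‖x i‖ ^ 2) := by
  set S := ∑ i, ‖x i‖ ^ 2 with hS
  have hSnn : 0 ≤ S := Finset.sum_nonneg fun i _ => by positivity
  have hx : ∀ i, ‖x i‖ ≤ Real.sqrt S := by
    intro i
    rw [show ‖x i‖ = Real.sqrt (‖x i‖ ^ 2) by rw [Real.sqrt_sq (norm_nonneg _)]]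
    exact Real.sqrt_le_sqrt (Finset.single_le_sum (f := fun i => ‖x i‖ ^ 2)
      (fun i _ => by positivity) (Finset.mem_univ i))
  set e : Fin N → ℝ := fun i => Real.exp (-(α * f (x i))) with he
  have hepos : ∀ i, 0 < e i := fun i => Real.exp_pos _
  have hsum : 0 < ∑ i, e i := Finset.sum_pos (fun i _ => hepos i)
    (Finset.univ_nonempty_iff.mpr ⟨⟨0, hN⟩⟩)
  calc ‖weightedAvg α f x‖ = (∑ i, e i)⁻¹ * ‖∑ i, e i • x i‖ := by
        rw [weightedAvg, norm_smul, Real.norm_eq_abs, abs_of_pos (inv_pos.mpr hsum)]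
    _ ≤ (∑ i, e i)⁻¹ * ∑ i, ‖e i • x i‖ :=
        mul_le_mul_of_nonneg_left (norm_sum_le _ _) (le_of_lt (inv_pos.mpr hsum))
    _ ≤ (∑ i, e i)⁻¹ * ∑ i, e i * Real.sqrt S := by
        apply mul_le_mul_of_nonneg_left _ (le_of_lt (inv_pos.mpr hsum))
        apply Finset.sum_le_sum
        intro i _
        rw [norm_smul, Real.norm_eq_abs, abs_of_pos (hepos i)]
        exact mul_le_mul_of_nonneg_left (hx i) (hepos i).le
    _ = Real.sqrt S := by
        rw [← Finset.sum_mul, ← mul_assoc, inv_mul_cancel₀ hsum.ne', one_mul]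

theorem stmt_13 (d N : ℕ) (hd : 1 ≤ d) (hN : 1 ≤ N) (α l σ : ℝ) (hα : 0 < α) (hl : 0 ≤ l)
    (f : EuclideanSpace ℝ (Fin d) → ℝ) (x : Fin N → EuclideanSpace ℝ (Fin d)) :
    -2 * l * ∑ i, ⟪x i, x i - weightedAvg α f x⟫
        + 2 * σ ^ 2 * ∑ j, ‖x j - weightedAvg α f x‖ ^ 2 ≤
      (2 * l * Real.sqrt N + 4 * σ ^ 2 * (1 + N)) * ∑ i, ‖x i‖ ^ 2 := by
  set v := weightedAvg α f x with hv
  set S := ∑ i, ‖x i‖ ^ 2 with hS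
  have hSnn : 0 ≤ S := Finset.sum_nonneg fun i _ => by positivity
  have hvS : ‖v‖ ≤ Real.sqrt S := weightedAvg_norm_le hN α f x
  have hv2 : ‖v‖ ^ 2 ≤ S := by
    have := pow_le_pow_left₀ (norm_nonneg v) hvS 2
    rwa [Real.sq_sqrt hSnn] at this
  -- bound on sum of norms
  have hsumnorm : ∑ i, ‖x i‖ ≤ Real.sqrt N * Real.sqrt S := by
    have h := sq_sum_le_card_mul_sum_sq (s := Finset.univ) (f := fun i : Fin N => ‖x i‖)
    simp only [Finset.card_univ, Fintype.card_fin] at h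
    have h2 : (∑ i, ‖x i‖) ^ 2 ≤ (Real.sqrt N * Real.sqrt S) ^ 2 := by
      rw [mul_pow, Real.sq_sqrt (Nat.cast_nonneg N), Real.sq_sqrt hSnn]
      exact h
    have hnn : (0:ℝ) ≤ ∑ i, ‖x i‖ := Finset.sum_nonneg fun i _ => norm_nonneg _
    exact (pow_le_pow_iff_left₀ hnn (by positivity) (by norm_num)).mp h2
  -- first term
  have hinner : ∑ i, ⟪x i, x i - v⟫ = S - ⟪∑ i, x i, v⟫ := by
    rw [sum_inner]
    rw [← Finset.sum_sub_distrib]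
    congr 1
    ext i
    rw [inner_sub_right, real_inner_self_eq_norm_sq]
  have hT : ⟪∑ i, x i, v⟫ ≤ Real.sqrt N * S := by
    calc ⟪∑ i, x i, v⟫ ≤ ‖∑ i, x i‖ * ‖v‖ := real_inner_le_norm _ _
      _ ≤ (∑ i, ‖x i‖) * Real.sqrt S :=
          mul_le_mul (norm_sum_le _ _) hvS (norm_nonneg _)
            (Finset.sum_nonneg fun i _ => norm_nonneg _)
      _ ≤ (Real.sqrt N * Real.sqrt S) * Real.sqrt S :=
          mul_le_mul_of_nonneg_right hsumnorm (Real.sqrt_nonneg _)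
      _ = Real.sqrt N * S := by
          rw [mul_assoc, Real.mul_self_sqrt hSnn]
  have h1 : -2 * l * ∑ i, ⟪x i, x i - v⟫ ≤ 2 * l * Real.sqrt N * S := by
    rw [hinner]
    have : -2 * l * (S - ⟪∑ i, x i, v⟫) = -2*l*S + 2*l*⟪∑ i, x i, v⟫ := by ring
    rw [this]
    have h2l : 2*l*⟪∑ i, x i, v⟫ ≤ 2*l*(Real.sqrt N * S) :=
      mul_le_mul_of_nonneg_left hT (by linarith)
    nlinarith
  -- second term
  have h2 : ∑ j, ‖x j - v‖ ^ 2 ≤ 2 * (1 + N) * S := by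
    have hb : ∀ j, ‖x j - v‖ ^ 2 ≤ 2 * ‖x j‖ ^ 2 + 2 * ‖v‖ ^ 2 := by
      intro j
      have := norm_sub_le (x j) v
      nlinarith [norm_nonneg (x j - v), norm_nonneg (x j), norm_nonneg v, sq_nonneg (‖x j‖ - ‖v‖)]
    calc ∑ j, ‖x j - v‖ ^ 2 ≤ ∑ j : Fin N, (2 * ‖x j‖ ^ 2 + 2 * ‖v‖ ^ 2) :=
          Finset.sum_le_sum fun j _ => hb j
      _ = 2 * S + 2 * N * ‖v‖ ^ 2 := by
          rw [Finset.sum_add_distrib, ← Finset.mul_sum]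
          simp [Finset.sum_const, Finset.card_univ]
          ring
      _ ≤ 2 * S + 2 * N * S := by
          have : (0:ℝ) ≤ 2 * N := by positivity
          nlinarith
      _ = 2 * (1 + N) * S := by ring
  have hσ : (0:ℝ) ≤ σ ^ 2 := sq_nonneg σ
  nlinarith [mul_le_mul_of_nonneg_left h2 (by positivity : (0:ℝ) ≤ 2 * σ ^ 2)]
end

section
/- Let d ≥ 1, β > 0, n > 0, t > 0, and let f : ℝ^d → ℝ be continuous with f ≥ 0 and Lipschitz continuous with constant L_f on B_n = {x : |x| ≤ n}; let f̲ and f̄ denote the infimum and supremum of f on B_n. Then for all continuous paths φ, φ̂ : [0,∞) → ℝ^d with sup_{0≤s≤t}|φ(s)| ≤ n and sup_{0≤s≤t}|φ̂(s)| ≤ n, one has the estimate | ∫_0^t φ̂(s) (exp(−β f(φ(s))) − exp(−β f(φ̂(s)))) ds | / ∫_0^t exp(−β f(φ(s))) ds ≤ β e^{β(f̄ − f̲)} L_f n · sup_{0≤s≤t}|φ(s) − φ̂(s)|. -/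
/-! The Lipschitz bound for `exp` on `(-∞, c]` gives
`|e^{-β f(φ)} - e^{-β f(φ̂)}| ≤ β e^{-β f̲} L_f |φ - φ̂|` pointwise, so the numerator is at most
`t β e^{-β f̲} L_f n sup |φ - φ̂|`, while the denominator is at least `t e^{-β f̄}`. -/

open Real Set MeasureTheory

lemma abs_exp_sub_exp_le_of_le {a b c : ℝ} (ha : a ≤ c) (hb : b ≤ c) :
    |exp a - exp b| ≤ exp c * |a - b| := by
  wlog hba : b ≤ a generalizing a b
  · rw [abs_sub_comm, abs_sub_comm a]
    exact this hb ha (le_of_not_ge hba)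
  have hexp_b : exp b = exp a * exp (b - a) := by rw [← exp_add]; ring_nf
  calc |exp a - exp b| = exp a - exp b := abs_of_nonneg (sub_nonneg.2 (exp_le_exp.2 hba))
    _ ≤ exp a * (a - b) := by nlinarith [add_one_le_exp (b - a), exp_pos a]
    _ ≤ exp c * |a - b| := by
      rw [abs_of_nonneg (sub_nonneg.2 hba)]
      exact mul_le_mul_of_nonneg_right (exp_le_exp.2 ha) (sub_nonneg.2 hba)

lemma abs_exp_neg_mul_sub_le_s14 {β m a b : ℝ} (hβ : 0 ≤ β) (ha : m ≤ a) (hb : m ≤ b) :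
    |exp (-(β * a)) - exp (-(β * b))| ≤ β * exp (-(β * m)) * |a - b| := by
  have hneg : ∀ {x}, m ≤ x → -(β * x) ≤ -(β * m) := fun hx =>
    neg_le_neg (mul_le_mul_of_nonneg_left hx hβ)
  refine (abs_exp_sub_exp_le_of_le (hneg ha) (hneg hb)).trans_eq ?_
  rw [show -(β * a) - -(β * b) = β * (b - a) by ring, abs_mul, abs_of_nonneg hβ, abs_sub_comm]
  ring

lemma norm_integral_div_integral_le {E : Type*} [NormedAddCommGroup E] [NormedSpace ℝ E]
    {g : ℝ → ℝ} {h : ℝ → E} {t c C : ℝ} (ht : 0 < t) (hc : 0 < c)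
    (hg : IntervalIntegrable g volume 0 t) (hcg : ∀ s ∈ Icc 0 t, c ≤ g s)
    (hhC : ∀ s ∈ Icc 0 t, ‖h s‖ ≤ C) :
    ‖∫ s in (0:ℝ)..t, h s‖ / ∫ s in (0:ℝ)..t, g s ≤ C / c := by
  have hden : t * c ≤ ∫ s in (0:ℝ)..t, g s := by
    simpa [mul_comm] using intervalIntegral.integral_mono_on ht.le intervalIntegrable_const hg hcg
  have hnum : ‖∫ s in (0:ℝ)..t, h s‖ ≤ C * t := by
    have := intervalIntegral.norm_integral_le_of_norm_le_const
      (fun s hs => hhC s (Ioc_subset_Icc_self (by rwa [uIoc_of_le ht.le] at hs)))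
    rwa [sub_zero, abs_of_pos ht] at this
  have hC : 0 ≤ C := (norm_nonneg _).trans (hhC t (right_mem_Icc.2 ht.le))
  calc ‖∫ s in (0:ℝ)..t, h s‖ / ∫ s in (0:ℝ)..t, g s ≤ C * t / (t * c) :=
        div_le_div₀ (by positivity) hnum (by positivity) hden
    _ = C / c := by field_simp

lemma norm_sub_le_iSup_norm_sub {α E : Type*} [SeminormedAddCommGroup E] {S : Set α}
    {φ ψ : α → E} {n : ℝ} (hφ : ∀ s ∈ S, ‖φ s‖ ≤ n) (hψ : ∀ s ∈ S, ‖ψ s‖ ≤ n)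
    {s : α} (hs : s ∈ S) : ‖φ s - ψ s‖ ≤ ⨆ s : S, ‖φ s.1 - ψ s.1‖ := by
  refine le_ciSup (f := fun s : S => ‖φ s.1 - ψ s.1‖) ⟨n + n, ?_⟩ ⟨s, hs⟩
  rintro _ ⟨s, rfl⟩
  exact (norm_sub_le _ _).trans (add_le_add (hφ s s.2) (hψ s s.2))

theorem stmt_14_general (d : ℕ) (β n Lf t : ℝ)
    (hβ : 0 < β) (hLf : 0 ≤ Lf) (ht : 0 < t)
    (f : EuclideanSpace ℝ (Fin d) → ℝ) (hf : Continuous f)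
    (hfLip : ∀ x y : EuclideanSpace ℝ (Fin d), ‖x‖ ≤ n → ‖y‖ ≤ n →
      |f x - f y| ≤ Lf * ‖x - y‖)
    (φ φ' : ℝ → EuclideanSpace ℝ (Fin d))
    (hφ : ContinuousOn φ (Set.Ici 0))
    (hφn : ∀ s ∈ Set.Icc (0:ℝ) t, ‖φ s‖ ≤ n)
    (hφ'n : ∀ s ∈ Set.Icc (0:ℝ) t, ‖φ' s‖ ≤ n) :
    ‖∫ s in (0:ℝ)..t, (Real.exp (-(β * f (φ s))) - Real.exp (-(β * f (φ' s)))) • φ' s‖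
        / (∫ s in (0:ℝ)..t, Real.exp (-(β * f (φ s)))) ≤
      β * Real.exp (β * (sSup (f '' {x | ‖x‖ ≤ n}) - sInf (f '' {x | ‖x‖ ≤ n}))) * Lf * n *
        ⨆ s : Set.Icc (0:ℝ) t, ‖φ s.1 - φ' s.1‖ := by
  set K : Set (EuclideanSpace ℝ (Fin d)) := {x | ‖x‖ ≤ n}
  have hK : IsCompact K := by
    have hK_eq : K = Metric.closedBall 0 n := by ext; simp [K]
    exact hK_eq ▸ isCompact_closedBall 0 n
  set A := sInf (f '' K)
  set B := sSup (f '' K)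
  set M := ⨆ s : Set.Icc (0:ℝ) t, ‖φ s.1 - φ' s.1‖
  have hA : ∀ x ∈ K, A ≤ f x := fun x hx =>
    csInf_le (hK.bddBelow_image hf.continuousOn) (mem_image_of_mem f hx)
  have hB : ∀ x ∈ K, f x ≤ B := fun x hx =>
    le_csSup (hK.bddAbove_image hf.continuousOn) (mem_image_of_mem f hx)
  have hM : 0 ≤ M := Real.iSup_nonneg fun _ => norm_nonneg _
  have hint : IntervalIntegrable (fun s => exp (-(β * f (φ s)))) volume 0 t :=
    ((continuous_exp.comp (continuous_const.mul hf).neg).comp_continuousOn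
      (hφ.mono fun _ hs => hs.1)).intervalIntegrable_of_Icc ht.le
  calc _ ≤ β * exp (-(β * A)) * (Lf * M) * n / exp (-(β * B)) := by
        refine norm_integral_div_integral_le ht (exp_pos _) hint (fun s hs => ?_) (fun s hs => ?_)
        · exact exp_le_exp.2 (neg_le_neg (mul_le_mul_of_nonneg_left (hB _ (hφn s hs)) hβ.le))
        · have hfM : |f (φ s) - f (φ' s)| ≤ Lf * M :=
            (hfLip _ _ (hφn s hs) (hφ'n s hs)).trans <| mul_le_mul_of_nonneg_left
              (norm_sub_le_iSup_norm_sub hφn hφ'n hs) hLf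
          rw [norm_smul, Real.norm_eq_abs]
          refine mul_le_mul ?_ (hφ'n s hs) (norm_nonneg _) (by positivity)
          exact (abs_exp_neg_mul_sub_le_s14 hβ.le (hA _ (hφn s hs)) (hA _ (hφ'n s hs))).trans
            (mul_le_mul_of_nonneg_left hfM (by positivity))
    _ = _ := by
      rw [mul_sub, exp_sub, exp_neg, exp_neg]
      field_simp

theorem stmt_14 (d : ℕ) (hd : 1 ≤ d) (β n Lf t : ℝ)
    (hβ : 0 < β) (hn : 0 < n) (hLf : 0 ≤ Lf) (ht : 0 < t)
    (f : EuclideanSpace ℝ (Fin d) → ℝ) (hf : Continuous f) (hfpos : ∀ x, 0 ≤ f x)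
    (hfLip : ∀ x y : EuclideanSpace ℝ (Fin d), ‖x‖ ≤ n → ‖y‖ ≤ n →
      |f x - f y| ≤ Lf * ‖x - y‖)
    (φ φ' : ℝ → EuclideanSpace ℝ (Fin d))
    (hφ : ContinuousOn φ (Set.Ici 0)) (hφ' : ContinuousOn φ' (Set.Ici 0))
    (hφn : ∀ s ∈ Set.Icc (0:ℝ) t, ‖φ s‖ ≤ n)
    (hφ'n : ∀ s ∈ Set.Icc (0:ℝ) t, ‖φ' s‖ ≤ n) :
    ‖∫ s in (0:ℝ)..t, (Real.exp (-(β * f (φ s))) - Real.exp (-(β * f (φ' s)))) • φ' s‖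
        / (∫ s in (0:ℝ)..t, Real.exp (-(β * f (φ s)))) ≤
      β * Real.exp (β * (sSup (f '' {x | ‖x‖ ≤ n}) - sInf (f '' {x | ‖x‖ ≤ n}))) * Lf * n *
        ⨆ s : Set.Icc (0:ℝ) t, ‖φ s.1 - φ' s.1‖ :=
  stmt_14_general d β n Lf t hβ hLf ht f hf hfLip φ φ' hφ hφn hφ'n
end
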